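/- arXiv:1107.5200 — 2 statements merged into one kernel-verified Lean document; each statement's English description precedes it below -/
import Mathlib

section
/- Let α > 1 be fixed. The partial sum S₂ = Σ_{n=2}^∞ Σ_{n/2 ≤ m < n} 1/((mn)^σ · ln(n/m)) satisfies S₂ = O(1) uniformly for σ ≥ α; more precisely, there is a constant C = C(α) such that S₂ ≤ C · 2^σ · Σ_{n=2}^∞ (ln n)/n^{2σ−1} for all σ ≥ α, and the right-hand side is bounded uniformly in σ ≥ α. -/
/-!
For `n/2 ≤ m < n` we have `(mn)^σ ≥ (n²/2)^σ` and `log (n/m) ≥ (n - m)/n`, so the inner sum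
over `m` is at most `2^σ n^(1-2σ)` times a harmonic sum, which is `O(log n)`. Summing over `n`
gives the series `∑ log n / n^(2σ-1)`, convergent for `σ > 1`; and `2^σ / n^(2σ-1) = n (2/n²)^σ`
decreases in `σ` for `n ≥ 2`, which makes the bound uniform in `σ ≥ α`.
-/

open Real Finset

lemma summable_log_div_rpow {p : ℝ} (hp : 1 < p) :
    Summable fun n : ℕ => log n / (n : ℝ) ^ p := by
  set ε := (p - 1) / 2
  have hε : 0 < ε := by simp only [ε]; linarith
  have hdom : Summable fun n : ℕ => (n : ℝ) ^ (ε - p) / ε :=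
    (summable_nat_rpow.2 (by simp only [ε]; linarith)).div_const ε
  refine hdom.of_nonneg_of_le (fun n => div_nonneg (log_natCast_nonneg n) (by positivity))
    fun n => ?_
  rw [rpow_sub' n.cast_nonneg (by simp only [ε]; linarith), div_right_comm]
  gcongr
  exact log_le_rpow_div n.cast_nonneg hε

lemma sub_div_le_log_div {m n : ℝ} (hm : 0 < m) (hn : 0 < n) : (n - m) / n ≤ log (n / m) := by
  have := one_sub_inv_le_log_of_pos (div_pos hn hm)
  rwa [inv_div, one_sub_div hn.ne'] at this

lemma inv_rpow_mul_log_div_le {σ m n : ℝ} (hσ : 0 ≤ σ) (hm : 0 < m) (hmn : m < n)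
    (hn : n ≤ 2 * m) :
    ((m * n) ^ σ * log (n / m))⁻¹ ≤ 2 ^ σ / n ^ (2 * σ - 1) * (n - m)⁻¹ := by
  have hn0 : 0 < n := hm.trans hmn
  have hsub : 0 < n - m := sub_pos.2 hmn
  have hpow : (n ^ 2 / 2) ^ σ ≤ (m * n) ^ σ := rpow_le_rpow (by positivity) (by nlinarith) hσ
  have hlog := sub_div_le_log_div hm hn0
  calc ((m * n) ^ σ * log (n / m))⁻¹ ≤ ((n ^ 2 / 2) ^ σ * ((n - m) / n))⁻¹ := by gcongr
    _ = 2 ^ σ / n ^ (2 * σ - 1) * (n - m)⁻¹ := by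
      rw [rpow_sub hn0, rpow_one, rpow_mul hn0.le, rpow_two, div_rpow (by positivity) zero_le_two]
      field_simp

lemma sum_Ico_inv_sub_eq_harmonic (n : ℕ) :
    ∑ m ∈ Ico 1 n, ((n : ℝ) - m)⁻¹ = harmonic (n - 1) := by
  rw [harmonic_eq_sum_Icc]
  push_cast
  refine sum_nbij' (fun m => n - m) (fun i => n - i) ?_ ?_ ?_ ?_ fun m hm => ?_
  any_goals intro m hm; simp only [mem_Ico, mem_Icc] at hm ⊢; omega
  rw [Nat.cast_sub (mem_Ico.1 hm).2.le]

lemma harmonic_pred_le_three_mul_log {n : ℕ} (hn : 2 ≤ n) :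
    (harmonic (n - 1) : ℝ) ≤ 3 * log n := by
  have hlog2 : log 2 ≤ log n := log_le_log two_pos (by exact_mod_cast hn)
  calc (harmonic (n - 1) : ℝ) ≤ 1 + log (n - 1 : ℕ) := harmonic_le_one_add_log _
    _ ≤ 1 + log n := by gcongr <;> norm_cast <;> omega
    _ ≤ 3 * log n := by linarith [log_two_gt_d9]

noncomputable def nearDiagonalSum (σ : ℝ) (n : ℕ) : ℝ :=
  ∑ m ∈ (Ico 1 n).filter (fun m => n ≤ 2 * m), (((m : ℝ) * n) ^ σ * log (n / m))⁻¹

lemma nearDiagonalSum_nonneg (σ : ℝ) (n : ℕ) : 0 ≤ nearDiagonalSum σ n := by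
  refine sum_nonneg fun m hm => ?_
  simp only [mem_filter, mem_Ico] at hm
  have hmn : (m : ℝ) ≤ n := by exact_mod_cast hm.1.2.le
  have hm0 : (0 : ℝ) < m := by exact_mod_cast hm.1.1
  have := log_nonneg ((one_le_div hm0).2 hmn)
  positivity

lemma nearDiagonalSum_le {σ : ℝ} {n : ℕ} (hσ : 0 ≤ σ) (hn : 2 ≤ n) :
    nearDiagonalSum σ n ≤ 3 * 2 ^ σ * (log n / (n : ℝ) ^ (2 * σ - 1)) := by
  set c : ℝ := 2 ^ σ / (n : ℝ) ^ (2 * σ - 1)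
  calc nearDiagonalSum σ n
      ≤ ∑ m ∈ (Ico 1 n).filter (fun m => n ≤ 2 * m), c * ((n : ℝ) - m)⁻¹ := by
        refine sum_le_sum fun m hm => ?_
        obtain ⟨⟨hm1, hmn⟩, hnm⟩ := by simpa only [mem_filter, mem_Ico] using hm
        exact inv_rpow_mul_log_div_le hσ (by exact_mod_cast hm1) (by exact_mod_cast hmn)
          (by exact_mod_cast hnm)
    _ ≤ ∑ m ∈ Ico 1 n, c * ((n : ℝ) - m)⁻¹ :=
        sum_le_sum_of_subset_of_nonneg (filter_subset _ _) fun m hm _ => by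
          have : (m : ℝ) < n := by exact_mod_cast (mem_Ico.1 hm).2
          have := sub_pos.2 this
          positivity
    _ = c * harmonic (n - 1) := by rw [← mul_sum, sum_Ico_inv_sub_eq_harmonic]
    _ ≤ c * (3 * log n) := by gcongr; exact harmonic_pred_le_three_mul_log hn
    _ = 3 * 2 ^ σ * (log n / (n : ℝ) ^ (2 * σ - 1)) := by simp only [c]; ring

lemma two_rpow_mul_log_div_rpow_antitone {n : ℝ} (hn : 2 ≤ n) :
    Antitone fun σ : ℝ => 2 ^ σ * (log n / n ^ (2 * σ - 1)) := by
  have hn0 : 0 < n := by linarith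
  have key (σ : ℝ) : 2 ^ σ * (log n / n ^ (2 * σ - 1)) = n * log n * (2 / n ^ 2) ^ σ := by
    rw [rpow_sub hn0, rpow_one, rpow_mul hn0.le, rpow_two, div_rpow zero_le_two (by positivity)]
    field_simp
  intro a b hab
  simp only [key]
  have hbase : 2 / n ^ 2 ≤ 1 := by rw [div_le_one (by positivity)]; nlinarith
  have := log_nonneg (by linarith : 1 ≤ n)
  exact mul_le_mul_of_nonneg_left (rpow_le_rpow_of_exponent_ge (by positivity) hbase hab)
    (by positivity)

/-- Let `α > 1` be fixed. The partial sum
`S₂ = Σ_{n=2}^∞ Σ_{n/2 ≤ m < n} 1/((mn)^σ · ln(n/m))` is `O(1)` uniformly for `σ ≥ α`: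
there is a constant `C = C(α)` such that
`S₂ ≤ C · 2^σ · Σ_{n=2}^∞ (ln n)/n^{2σ−1}` for all `σ ≥ α`, and the right-hand side
is bounded uniformly in `σ ≥ α` (here `n = k + 2`). -/
theorem S2_bounded (α : ℝ) (hα : 1 < α) :
    ∃ C : ℝ,
      (∀ σ : ℝ, α ≤ σ →
        Summable (fun k : ℕ =>
          ∑ m ∈ (Finset.Ico 1 (k + 2)).filter (fun m => k + 2 ≤ 2 * m),
            (((m : ℝ) * (k + 2 : ℝ)) ^ σ * Real.log ((k + 2 : ℝ) / (m : ℝ)))⁻¹) ∧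
        (∑' k : ℕ, ∑ m ∈ (Finset.Ico 1 (k + 2)).filter (fun m => k + 2 ≤ 2 * m),
            (((m : ℝ) * (k + 2 : ℝ)) ^ σ * Real.log ((k + 2 : ℝ) / (m : ℝ)))⁻¹) ≤
          C * (2 : ℝ) ^ σ * ∑' k : ℕ, Real.log (k + 2) / (k + 2 : ℝ) ^ (2 * σ - 1)) ∧
      ∃ C' : ℝ, ∀ σ : ℝ, α ≤ σ →
        C * (2 : ℝ) ^ σ * (∑' k : ℕ, Real.log (k + 2) / (k + 2 : ℝ) ^ (2 * σ - 1)) ≤ C' := by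
  have hrhs (σ : ℝ) (hσ : α ≤ σ) :
      Summable fun k : ℕ => log (k + 2) / ((k : ℝ) + 2) ^ (2 * σ - 1) := by
    exact_mod_cast (summable_nat_add_iff 2).2 (summable_log_div_rpow (p := 2 * σ - 1) (by linarith))
  refine ⟨3, fun σ hσ => ?_, 3 * 2 ^ α * ∑' k : ℕ, log (k + 2) / ((k : ℝ) + 2) ^ (2 * α - 1),
    fun σ hσ => ?_⟩
  · have hle (k : ℕ) := nearDiagonalSum_le (n := k + 2) (by linarith : 0 ≤ σ) (by omega)
    have hnonneg (k : ℕ) := nearDiagonalSum_nonneg σ (k + 2)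
    push_cast [nearDiagonalSum] at hle hnonneg
    have hdom := (hrhs σ hσ).mul_left (3 * 2 ^ σ)
    have hsum := hdom.of_nonneg_of_le hnonneg hle
    exact ⟨hsum, (hsum.tsum_le_tsum hle hdom).trans_eq tsum_mul_left⟩
  · rw [mul_assoc, mul_assoc 3 (2 ^ α)]
    gcongr 3 * ?_
    rw [← tsum_mul_left, ← tsum_mul_left]
    exact Summable.tsum_le_tsum
      (fun k => two_rpow_mul_log_div_rpow_antitone (le_add_of_nonneg_left k.cast_nonneg) hσ)
      ((hrhs σ hσ).mul_left _) ((hrhs α le_rfl).mul_left _)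
end

section
/- Let α > 1 be fixed and let σ ≥ α. Then ∫_T^{T+U} |ζ(σ+it)|² dt ∼ ζ(2σ)·U as T → ∞, uniformly over all U ≥ ln ln T: for every ε > 0 there exists T₀ (depending only on ε and α) such that for all T ≥ T₀ and all U ≥ ln ln T one has |∫_T^{T+U} |ζ(σ+it)|² dt − ζ(2σ)U| ≤ ε · ζ(2σ) · U. -/
/-!
For `σ ≥ α > 1` the Dirichlet series of `ζ(σ + it)` converges absolutely, with tail beyond `N`
bounded by the tail `r_N` of `ζ(α)`, uniformly in `σ` and `t`. Replacing `ζ` by its partial sum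
`P_N` therefore changes `|ζ|²` by `O(r_N)` pointwise. Expanding `|P_N|²`, the diagonal terms
integrate to `U ∑_{n ≤ N} n^(-2σ)`, which is `ζ(2σ) U + O(r_N U)`, while each off-diagonal term
is an integral of `e^{iθt}` with `|θ| = |log(m/n)| ≥ 1/(N+1)`, hence `O(N)`, uniformly in `T`
and `U`. So the error is `O(r_N U) + O(N³)`; fix `N` with `r_N` small, and then `U ≥ ln ln T`
makes `U` large enough to absorb `O(N³)`.
-/

open Complex Finset

namespace ZetaMeanValue

theorem abs_sq_norm_sub_sq_norm_le {E : Type*} [SeminormedAddCommGroup E] {x y : E} {A r : ℝ}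
    (hx : ‖x‖ ≤ A) (hy : ‖y‖ ≤ A) (hxy : ‖x - y‖ ≤ r) :
    |‖x‖ ^ 2 - ‖y‖ ^ 2| ≤ 2 * A * r := by
  rw [sq_sub_sq, abs_mul, abs_of_nonneg (by positivity), mul_comm]
  have hr : 0 ≤ r := (norm_nonneg _).trans hxy
  calc |‖x‖ - ‖y‖| * (‖x‖ + ‖y‖) ≤ r * (2 * A) := by
        gcongr
        · exact (abs_norm_sub_norm_le x y).trans hxy
        · linarith
    _ = 2 * A * r := by ring

theorem le_log_log_of_exp_exp_le {c T : ℝ} (hT : Real.exp (Real.exp c) ≤ T) :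
    c ≤ Real.log (Real.log T) := by
  have hlog : Real.exp c ≤ Real.log T := by
    simpa using Real.log_le_log (Real.exp_pos _) hT
  simpa using Real.log_le_log (Real.exp_pos _) hlog

theorem norm_integral_exp_ofReal_mul_I_le {θ : ℝ} (hθ : θ ≠ 0) (a b : ℝ) :
    ‖∫ t in a..b, exp (↑(θ * t) * I)‖ ≤ 2 / |θ| := by
  have hθI : (θ : ℂ) * I ≠ 0 := mul_ne_zero (ofReal_ne_zero.2 hθ) I_ne_zero
  have hcomm : ∀ t : ℝ, exp (↑(θ * t) * I) = exp ((θ * I) * t) := fun t => by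
    push_cast; ring_nf
  simp only [hcomm, integral_exp_mul_complex hθI, norm_div, norm_mul, norm_I, mul_one,
    norm_real, Real.norm_eq_abs]
  gcongr
  calc ‖exp (θ * I * b) - exp (θ * I * a)‖ ≤ ‖exp (θ * I * b)‖ + ‖exp (θ * I * a)‖ :=
        norm_sub_le _ _
    _ = 2 := by
        simp only [← hcomm, norm_exp_ofReal_mul_I]; norm_num

theorem ofReal_norm_sq_sum_mul_exp {ι : Type*} (s : Finset ι) (c : ι → ℂ) (ω : ι → ℝ) (t : ℝ) :
    ((‖∑ i ∈ s, c i * exp (↑(ω i * t) * I)‖ ^ 2 : ℝ) : ℂ) =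
      ∑ i ∈ s, ∑ j ∈ s, c i * starRingEnd ℂ (c j) * exp (↑((ω i - ω j) * t) * I) := by
  rw [ofReal_pow, ← mul_conj', map_sum, sum_mul_sum]
  refine sum_congr rfl fun i _ => sum_congr rfl fun j _ => ?_
  rw [map_mul, ← exp_conj, map_mul, conj_ofReal, conj_I]
  have : exp (↑((ω i - ω j) * t) * I) = exp (↑(ω i * t) * I) * exp (↑(ω j * t) * -I) := by
    rw [← exp_add]; push_cast; ring_nf
  rw [this]; ring

theorem ofReal_integral_norm_sq_sum_mul_exp {ι : Type*} (s : Finset ι) (c : ι → ℂ) (ω : ι → ℝ)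
    (a b : ℝ) :
    ((∫ t in a..b, ‖∑ i ∈ s, c i * exp (↑(ω i * t) * I)‖ ^ 2 : ℝ) : ℂ) =
      ∑ i ∈ s, ∑ j ∈ s, c i * starRingEnd ℂ (c j) * ∫ t in a..b, exp (↑((ω i - ω j) * t) * I) := by
  have hint : ∀ i j, IntervalIntegrable (fun t : ℝ => exp (↑((ω i - ω j) * t) * I))
      MeasureTheory.volume a b := fun i j => by
    apply Continuous.intervalIntegrable; fun_prop
  rw [← intervalIntegral.integral_ofReal]
  simp only [ofReal_norm_sq_sum_mul_exp]
  rw [intervalIntegral.integral_finsetSum fun i _ =>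
    (continuous_finsetSum _ fun j _ => by fun_prop).intervalIntegrable _ _]
  refine sum_congr rfl fun i _ => ?_
  rw [intervalIntegral.integral_finsetSum fun j _ => (hint i j).const_mul _]
  simp only [intervalIntegral.integral_const_mul]

theorem abs_integral_norm_sq_sum_sub_le {ι : Type*} (s : Finset ι) (c : ι → ℂ) (ω : ι → ℝ)
    {δ : ℝ} (hδ : 0 < δ) (hsep : ∀ i ∈ s, ∀ j ∈ s, i ≠ j → δ ≤ |ω i - ω j|) (a b : ℝ) :
    |(∫ t in a..b, ‖∑ i ∈ s, c i * exp (↑(ω i * t) * I)‖ ^ 2) - (b - a) * ∑ i ∈ s, ‖c i‖ ^ 2|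
      ≤ 2 / δ * (∑ i ∈ s, ‖c i‖) ^ 2 := by
  classical
  set K : ι → ι → ℂ := fun i j =>
    (∫ t in a..b, exp (↑((ω i - ω j) * t) * I)) - if i = j then ((b - a : ℝ) : ℂ) else 0
  have hK : ∀ i ∈ s, ∀ j ∈ s, ‖K i j‖ ≤ 2 / δ := by
    intro i hi j hj
    by_cases hij : i = j
    · simp [K, hij]; positivity
    · have hθ : δ ≤ |ω i - ω j| := hsep i hi j hj hij
      simp only [K, hij, if_false, sub_zero]
      refine (norm_integral_exp_ofReal_mul_I_le ?_ a b).trans ?_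
      · intro h; rw [h, abs_zero] at hθ; linarith
      · gcongr
  have hdiag : (((b - a) * ∑ i ∈ s, ‖c i‖ ^ 2 : ℝ) : ℂ) =
      ∑ i ∈ s, ∑ j ∈ s, c i * starRingEnd ℂ (c j) * if i = j then ((b - a : ℝ) : ℂ) else 0 := by
    push_cast
    rw [mul_sum]
    refine sum_congr rfl fun i hi => ?_
    simp only [mul_ite, mul_zero, sum_ite_eq, hi, if_true, mul_conj']
    ring
  have hsplit : (((∫ t in a..b, ‖∑ i ∈ s, c i * exp (↑(ω i * t) * I)‖ ^ 2) -
      (b - a) * ∑ i ∈ s, ‖c i‖ ^ 2 : ℝ) : ℂ) =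
      ∑ i ∈ s, ∑ j ∈ s, c i * starRingEnd ℂ (c j) * K i j := by
    rw [ofReal_sub, ofReal_integral_norm_sq_sum_mul_exp, hdiag]
    simp only [K, mul_sub, sum_sub_distrib]
  rw [← Real.norm_eq_abs, ← norm_real, hsplit, sq, sum_mul_sum, mul_sum]
  refine (norm_sum_le _ _).trans (sum_le_sum fun i hi => ?_)
  rw [mul_sum]
  refine (norm_sum_le _ _).trans (sum_le_sum fun j hj => ?_)
  rw [norm_mul, norm_mul, RCLike.norm_conj]
  calc ‖c i‖ * ‖c j‖ * ‖K i j‖ ≤ ‖c i‖ * ‖c j‖ * (2 / δ) := by gcongr; exact hK i hi j hj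
    _ = _ := by ring

theorem one_div_nat_add_one_cpow (n : ℕ) (σ t : ℝ) :
    1 / ((n : ℂ) + 1) ^ ((σ : ℂ) + t * I) =
      (((n : ℝ) + 1) ^ (-σ) : ℝ) * exp (↑(-Real.log ((n : ℝ) + 1) * t) * I) := by
  have hpos : (0 : ℝ) < (n : ℝ) + 1 := by positivity
  have hcast : (n : ℂ) + 1 = (((n : ℝ) + 1 : ℝ) : ℂ) := by push_cast; rfl
  rw [hcast, cpow_def_of_ne_zero (ofReal_ne_zero.2 hpos.ne'), ← ofReal_log hpos.le,
    Real.rpow_def_of_pos hpos, ofReal_exp, one_div, ← exp_neg, ← exp_add]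
  push_cast
  ring_nf

theorem one_div_nat_add_one_cpow_ofReal (n : ℕ) (x : ℝ) :
    1 / ((n : ℂ) + 1) ^ (x : ℂ) = (((n : ℝ) + 1) ^ (-x) : ℝ) := by
  simpa using one_div_nat_add_one_cpow n x 0

theorem norm_one_div_nat_add_one_cpow (n : ℕ) (s : ℂ) :
    ‖1 / ((n : ℂ) + 1) ^ s‖ = ((n : ℝ) + 1) ^ (-s.re) := by
  have hpos : (0 : ℝ) < (n : ℝ) + 1 := by positivity
  have hcast : (n : ℂ) + 1 = (((n : ℝ) + 1 : ℝ) : ℂ) := by push_cast; rfl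
  rw [hcast, norm_div, norm_one, norm_cpow_eq_rpow_re_of_pos hpos, Real.rpow_neg hpos.le,
    one_div]

/-- `zetaTail α N = ∑_{n > N} n^(-α)`. -/
noncomputable def zetaTail (α : ℝ) (N : ℕ) : ℝ := ∑' k : ℕ, (((k + N : ℕ) : ℝ) + 1) ^ (-α)

theorem tendsto_zetaTail_zero (α : ℝ) :
    Filter.Tendsto (zetaTail α) Filter.atTop (nhds 0) :=
  tendsto_sum_nat_add fun n : ℕ => ((n : ℝ) + 1) ^ (-α)

variable {α : ℝ}

theorem summable_nat_add_one_rpow_neg (hα : 1 < α) :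
    Summable fun n : ℕ => ((n : ℝ) + 1) ^ (-α) := by
  simpa using (summable_nat_add_iff 1).2 (Real.summable_nat_rpow.2 (by linarith : -α < -1))

theorem norm_riemannZeta_sub_sum_le (hα : 1 < α) {s : ℂ} (hs : α ≤ s.re) (N : ℕ) :
    ‖riemannZeta s - ∑ n ∈ range N, 1 / ((n : ℂ) + 1) ^ s‖ ≤ zetaTail α N := by
  have hnorm : ∀ n : ℕ, ‖1 / ((n : ℂ) + 1) ^ s‖ ≤ ((n : ℝ) + 1) ^ (-α) := fun n => by
    rw [norm_one_div_nat_add_one_cpow]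
    exact Real.rpow_le_rpow_of_exponent_le (by linarith [n.cast_nonneg (α := ℝ)]) (by linarith)
  have hsum : Summable fun n : ℕ => ‖1 / ((n : ℂ) + 1) ^ s‖ :=
    (summable_nat_add_one_rpow_neg hα).of_nonneg_of_le (fun _ => norm_nonneg _) hnorm
  rw [zeta_eq_tsum_one_div_nat_add_one_cpow (by linarith),
    ← (hsum.of_norm).sum_add_tsum_nat_add N, add_sub_cancel_left]
  have hsumN : Summable fun k : ℕ => ‖1 / (((k + N : ℕ) : ℂ) + 1) ^ s‖ :=
    (summable_nat_add_iff N).2 hsum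
  have htail : Summable fun k : ℕ => (((k + N : ℕ) : ℝ) + 1) ^ (-α) :=
    (summable_nat_add_iff N).2 (summable_nat_add_one_rpow_neg hα)
  exact (norm_tsum_le_tsum_norm hsumN).trans
    (hsumN.tsum_le_tsum (fun k => hnorm (k + N)) htail)

theorem norm_riemannZeta_le (hα : 1 < α) {s : ℂ} (hs : α ≤ s.re) :
    ‖riemannZeta s‖ ≤ zetaTail α 0 := by
  simpa using norm_riemannZeta_sub_sum_le hα hs 0

theorem norm_sum_one_div_cpow_le (hα : 1 < α) {s : ℂ} (hs : α ≤ s.re) (N : ℕ) :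
    ‖∑ n ∈ range N, 1 / ((n : ℂ) + 1) ^ s‖ ≤ zetaTail α 0 := by
  calc ‖∑ n ∈ range N, 1 / ((n : ℂ) + 1) ^ s‖ ≤ ∑ n ∈ range N, ((n : ℝ) + 1) ^ (-α) := by
        refine (norm_sum_le _ _).trans (sum_le_sum fun n _ => ?_)
        rw [norm_one_div_nat_add_one_cpow]
        exact Real.rpow_le_rpow_of_exponent_le (by linarith [n.cast_nonneg (α := ℝ)]) (by linarith)
    _ ≤ zetaTail α 0 := by
        simpa [zetaTail] using (summable_nat_add_one_rpow_neg hα).sum_le_tsum (range N)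
          (fun n _ => by positivity)

theorem abs_sum_rpow_neg_sub_riemannZeta_re_le (hα : 1 < α) {x : ℝ} (hx : α ≤ x) (N : ℕ) :
    |∑ n ∈ range N, ((n : ℝ) + 1) ^ (-x) - (riemannZeta x).re| ≤ zetaTail α N := by
  have h := norm_riemannZeta_sub_sum_le hα (s := x) (by simpa using hx) N
  simp only [one_div_nat_add_one_cpow_ofReal, ← ofReal_sum] at h
  rw [abs_sub_comm]
  calc |(riemannZeta x).re - ∑ n ∈ range N, ((n : ℝ) + 1) ^ (-x)|
      = |(riemannZeta x - ↑(∑ n ∈ range N, ((n : ℝ) + 1) ^ (-x))).re| := by simp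
    _ ≤ zetaTail α N := (abs_re_le_norm _).trans h

theorem one_le_riemannZeta_re {x : ℝ} (hx : 1 < x) : 1 ≤ (riemannZeta x).re := by
  have hsum := summable_nat_add_one_rpow_neg hx
  rw [zeta_eq_tsum_one_div_nat_add_one_cpow (by simpa using hx)]
  simp only [one_div_nat_add_one_cpow_ofReal, ← ofReal_tsum, ofReal_re]
  simpa using hsum.le_tsum 0 (fun n _ => by positivity)

theorem continuous_riemannZeta_vertical {σ : ℝ} (hσ : σ ≠ 1) :
    Continuous fun t : ℝ => riemannZeta (σ + t * I) := by
  refine continuous_iff_continuousAt.2 fun t => ?_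
  have hne : (σ : ℂ) + t * I ≠ 1 := fun h => hσ (by simpa using congrArg re h)
  exact (differentiableAt_riemannZeta hne).continuousAt.comp
    (f := fun t : ℝ => (σ : ℂ) + t * I) (by fun_prop)

theorem inv_le_log_sub_log_of_lt {N m n : ℕ} (hn : n < N) (hmn : m < n) :
    ((N : ℝ) + 1)⁻¹ ≤ Real.log ((n : ℝ) + 1) - Real.log ((m : ℝ) + 1) := by
  have hmn' : (m : ℝ) + 1 ≤ n := by exact_mod_cast hmn
  have hnN : (n : ℝ) + 1 ≤ N := by exact_mod_cast hn
  rw [← Real.log_div (by positivity) (by positivity)]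
  refine le_trans ?_ (Real.one_sub_inv_le_log_of_pos (by positivity))
  rw [inv_div, one_sub_div (by positivity)]
  calc ((N : ℝ) + 1)⁻¹ ≤ ((n : ℝ) + 1)⁻¹ := by gcongr
    _ = 1 / ((n : ℝ) + 1) := (one_div _).symm
    _ ≤ ((n : ℝ) + 1 - ((m : ℝ) + 1)) / ((n : ℝ) + 1) := by gcongr; linarith

theorem inv_le_abs_log_sub_log {N m n : ℕ} (hm : m < N) (hn : n < N) (hmn : m ≠ n) :
    ((N : ℝ) + 1)⁻¹ ≤ |Real.log ((m : ℝ) + 1) - Real.log ((n : ℝ) + 1)| := by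
  rcases hmn.lt_or_gt with h | h
  · rw [abs_sub_comm]; exact (inv_le_log_sub_log_of_lt hn h).trans (le_abs_self _)
  · exact (inv_le_log_sub_log_of_lt hm h).trans (le_abs_self _)

theorem abs_integral_norm_sq_sum_one_div_cpow_sub_le {σ : ℝ} (hσ : 0 ≤ σ) (N : ℕ) (a b : ℝ) :
    |(∫ t in a..b, ‖∑ n ∈ range N, 1 / ((n : ℂ) + 1) ^ ((σ : ℂ) + t * I)‖ ^ 2) -
        (b - a) * ∑ n ∈ range N, ((n : ℝ) + 1) ^ (-(2 * σ))|
      ≤ 2 * ((N : ℝ) + 1) * N ^ 2 := by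
  have hcoeff : ∀ n : ℕ, ‖((((n : ℝ) + 1) ^ (-σ) : ℝ) : ℂ)‖ = ((n : ℝ) + 1) ^ (-σ) := fun n => by
    rw [norm_real, Real.norm_of_nonneg (by positivity)]
  have hsep : ∀ m ∈ range N, ∀ n ∈ range N, m ≠ n → ((N : ℝ) + 1)⁻¹ ≤
      |-Real.log ((m : ℝ) + 1) - -Real.log ((n : ℝ) + 1)| := fun m hm n hn hmn => by
    rw [neg_sub_neg, abs_sub_comm]
    exact inv_le_abs_log_sub_log (mem_range.1 hm) (mem_range.1 hn) hmn
  have hmain := abs_integral_norm_sq_sum_sub_le (range N)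
    (fun n => ((((n : ℝ) + 1) ^ (-σ) : ℝ) : ℂ)) (fun n => -Real.log ((n : ℝ) + 1))
    (by positivity) hsep a b
  simp only [hcoeff, ← one_div_nat_add_one_cpow] at hmain
  have hsq : ∀ n : ℕ, (((n : ℝ) + 1) ^ (-σ)) ^ 2 = ((n : ℝ) + 1) ^ (-(2 * σ)) := fun n => by
    rw [← Real.rpow_natCast, ← Real.rpow_mul (by positivity)]; ring_nf
  have hle : ∑ n ∈ range N, ((n : ℝ) + 1) ^ (-σ) ≤ N := by
    simpa using sum_le_card_nsmul (range N) _ 1 fun n _ =>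
      Real.rpow_le_one_of_one_le_of_nonpos (by linarith [n.cast_nonneg (α := ℝ)]) (by linarith)
  simp only [hsq] at hmain
  refine hmain.trans ?_
  rw [div_inv_eq_mul]
  gcongr

theorem abs_integral_norm_riemannZeta_sq_sub_le (hα : 1 < α) {σ : ℝ} (hσ : α ≤ σ) (N : ℕ)
    (T : ℝ) {U : ℝ} (hU : 0 ≤ U) :
    |(∫ t in T..(T + U), ‖riemannZeta (σ + t * I)‖ ^ 2) -
        (riemannZeta ((2 * σ : ℝ) : ℂ)).re * U|
      ≤ (2 * zetaTail α 0 + 1) * zetaTail α N * U + 2 * ((N : ℝ) + 1) * N ^ 2 := by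
  set A := zetaTail α 0
  set r := zetaTail α N
  set P : ℝ → ℂ := fun t => ∑ n ∈ range N, 1 / ((n : ℂ) + 1) ^ ((σ : ℂ) + t * I)
  set D := ∑ n ∈ range N, ((n : ℝ) + 1) ^ (-(2 * σ))
  have hre : ∀ t : ℝ, α ≤ ((σ : ℂ) + t * I).re := fun t => by simpa using hσ
  have hζ : Continuous fun t : ℝ => ‖riemannZeta (σ + t * I)‖ ^ 2 :=
    ((continuous_riemannZeta_vertical (by linarith)).norm).pow 2
  have hP : Continuous fun t => ‖P t‖ ^ 2 := by
    refine ((continuous_finsetSum _ fun n _ => ?_).norm).pow 2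
    simp only [one_div_nat_add_one_cpow]
    fun_prop
  have htrunc : |(∫ t in T..(T + U), ‖riemannZeta (σ + t * I)‖ ^ 2) -
      ∫ t in T..(T + U), ‖P t‖ ^ 2| ≤ 2 * A * r * U := by
    rw [← intervalIntegral.integral_sub (hζ.intervalIntegrable _ _) (hP.intervalIntegrable _ _)]
    have hpt : ∀ t : ℝ, ‖‖riemannZeta (σ + t * I)‖ ^ 2 - ‖P t‖ ^ 2‖ ≤ 2 * A * r := fun t => by
      rw [Real.norm_eq_abs]
      exact abs_sq_norm_sub_sq_norm_le (norm_riemannZeta_le hα (hre t))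
        (norm_sum_one_div_cpow_le hα (hre t) N) (norm_riemannZeta_sub_sum_le hα (hre t) N)
    have := intervalIntegral.norm_integral_le_of_norm_le_const (a := T) (b := T + U)
      fun t _ => hpt t
    rwa [Real.norm_eq_abs, add_sub_cancel_left, abs_of_nonneg hU] at this
  have hpoly : |(∫ t in T..(T + U), ‖P t‖ ^ 2) - U * D| ≤ 2 * ((N : ℝ) + 1) * N ^ 2 := by
    have := abs_integral_norm_sq_sum_one_div_cpow_sub_le (by linarith : 0 ≤ σ) N T (T + U)
    rwa [add_sub_cancel_left] at this
  have hdiag : |D - (riemannZeta ((2 * σ : ℝ) : ℂ)).re| ≤ r :=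
    abs_sum_rpow_neg_sub_riemannZeta_re_le hα (by linarith) N
  calc _ = |((∫ t in T..(T + U), ‖riemannZeta (σ + t * I)‖ ^ 2) - ∫ t in T..(T + U), ‖P t‖ ^ 2)
        + ((∫ t in T..(T + U), ‖P t‖ ^ 2) - U * D)
        + (D - (riemannZeta ((2 * σ : ℝ) : ℂ)).re) * U| := by congr 1; ring
    _ ≤ 2 * A * r * U + 2 * ((N : ℝ) + 1) * N ^ 2 + r * U := by
        refine (abs_add_three _ _ _).trans ?_
        rw [abs_mul, abs_of_nonneg hU]
        gcongr
    _ = (2 * A + 1) * r * U + 2 * ((N : ℝ) + 1) * N ^ 2 := by ring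

end ZetaMeanValue

open ZetaMeanValue in
/-- Let `α > 1` be fixed. For every `ε > 0` there exists `T₀`
(depending only on `ε` and `α`) such that for every `σ ≥ α`, all `T ≥ T₀` and all
`U ≥ ln ln T`, one has
`|∫_T^{T+U} |ζ(σ+it)|² dt − ζ(2σ)U| ≤ ε · ζ(2σ) · U`, i.e. the local mean-value formula
is a genuine asymptotic formula `∫_T^{T+U} |ζ(σ+it)|² dt ∼ ζ(2σ)·U` uniformly in
`U ≥ ln ln T` and `σ ≥ α`. -/
theorem local_mean_value_asymptotic (α : ℝ) (hα : 1 < α) :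
    ∀ ε : ℝ, 0 < ε → ∃ T₀ : ℝ, ∀ σ : ℝ, α ≤ σ → ∀ T : ℝ, T₀ ≤ T →
      ∀ U : ℝ, Real.log (Real.log T) ≤ U →
        |(∫ t in T..(T + U), ‖riemannZeta (σ + t * Complex.I)‖ ^ 2) -
            (riemannZeta ((2 * σ : ℝ) : ℂ)).re * U| ≤
          ε * (riemannZeta ((2 * σ : ℝ) : ℂ)).re * U := by
  intro ε hε
  have hsmall : (2 * zetaTail α 0 + 1) * 0 < ε / 2 := by rw [mul_zero]; positivity
  obtain ⟨N, hN⟩ := (((tendsto_zetaTail_zero α).const_mul _).eventually_lt_const hsmall).exists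
  set C := 2 * ((N : ℝ) + 1) * N ^ 2
  refine ⟨Real.exp (Real.exp (C / (ε / 2))), fun σ hσ T hT U hU => ?_⟩
  have hCU : C / (ε / 2) ≤ U := (le_log_log_of_exp_exp_le hT).trans hU
  have hU0 : 0 ≤ U := le_trans (by positivity) hCU
  have hζ : 1 ≤ (riemannZeta ((2 * σ : ℝ) : ℂ)).re := one_le_riemannZeta_re (by linarith)
  calc _ ≤ (2 * zetaTail α 0 + 1) * zetaTail α N * U + C :=
        abs_integral_norm_riemannZeta_sq_sub_le hα hσ N T hU0
    _ ≤ ε / 2 * U + ε / 2 * U := by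
        gcongr
        rwa [div_le_iff₀ (by positivity), mul_comm] at hCU
    _ ≤ ε * (riemannZeta ((2 * σ : ℝ) : ℂ)).re * U := by
        nlinarith [mul_nonneg (mul_nonneg hε.le hU0) (sub_nonneg.2 hζ)]
end
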